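/- Let φ: R^d → R be convex and 1-Lipschitz, suppose D ⊆ R^d is such that φ is differentiable on D with ‖∇φ(x)‖ < 1 only at points of an open set Ω on which ∇φ is injective, and let x ∉ Ω̄ be a point where the subdifferential ∂φ(x) contains two distinct points u_1 ≠ u_2, each of norm 1. Then (1-t)u_1 + t u_2 ∈ ∂φ(x) for all t ∈ [0,1] and ‖(1-t)u_1 + t u_2‖ < 1 for t ∈ (0,1). Consequently, if additionally every subgradient of φ of norm < 1 is attained as ∇φ(x_0) at some x_0 ∈ Ω, injectivity of ∇φ on Ω forces ∂φ(x) to be a singleton of norm 1 at every x ∉ Ω̄; hence φ is differentiable at every such x with ‖∇φ(x)‖ = 1. -/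

import Mathlib

/-!
A subgradient `u` at `x` that is also the unique subgradient at some `x₀ ∈ Ω` makes `φ` affine
with slope `u` on the segment `[x₀, x]`; then every point `y` of the open segment has `∂φ(y) = {u}`
as well, and choosing `y ∈ Ω` close to `x₀` contradicts injectivity of `∇φ` on `Ω`. Hence all
subgradients at `x ∉ closure Ω` have norm `1` (the Lipschitz bound gives `≤ 1`). As `∂φ(x)` is convex
and the Euclidean unit ball is strictly convex, two distinct subgradients would have a midpoint
subgradient of norm `< 1`, so `∂φ(x)` is a singleton.
-/

open scoped RealInnerProductSpace

/-- The subdifferential of `φ` at `x`. -/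
def SubdiffAt {d : ℕ} (φ : EuclideanSpace ℝ (Fin d) → ℝ) (x : EuclideanSpace ℝ (Fin d)) :
    Set (EuclideanSpace ℝ (Fin d)) :=
  {u | ∀ z, ⟪u, z - x⟫ ≤ φ z - φ x}

open Set

theorem ConvexOn.exists_strongDual_le_sub {E : Type*} [NormedAddCommGroup E] [NormedSpace ℝ E]
    {φ : E → ℝ} (hconv : ConvexOn ℝ univ φ) (hcont : Continuous φ) (x : E) :
    ∃ ℓ : StrongDual ℝ E, ∀ z, ℓ (z - x) ≤ φ z - φ x := by
  have hopen : IsOpen {p : E × ℝ | p.1 ∈ univ ∧ φ p.1 < p.2} := by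
    simpa only [mem_univ, true_and] using isOpen_lt hcont.fst' continuous_snd
  obtain ⟨f, hf⟩ := geometric_hahn_banach_open_point hconv.convex_strict_epigraph hopen
    (x := (x, φ x)) (by simp)
  set g := f.comp (.inl ℝ E ℝ)
  set c := -f (0, 1)
  have hsplit (z : E) (t : ℝ) : f (z, t) = g z - t * c := by
    have : ((z, t) : E × ℝ) = (z, 0) + t • (0, 1) := by simp
    rw [this, map_add, map_smul, smul_eq_mul]
    simp [g, c]
  have hc : 0 < c := by
    have := hf (x, φ x + 1) (by simp)
    rw [hsplit, hsplit] at this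
    linarith
  refine ⟨c⁻¹ • g, fun z => le_of_forall_gt_imp_ge_of_dense fun t ht => ?_⟩
  have := hf (z, φ x + t) ⟨mem_univ z, by dsimp only; linarith⟩
  rw [hsplit, hsplit] at this
  rw [smul_apply, smul_eq_mul, inv_mul_le_iff₀ hc, map_sub]
  linarith

section
variable {d : ℕ} {φ : EuclideanSpace ℝ (Fin d) → ℝ} {a b x y u : EuclideanSpace ℝ (Fin d)}

theorem subdiffAt_nonempty (hconv : ConvexOn ℝ univ φ) (hcont : Continuous φ) :
    (SubdiffAt φ x).Nonempty := by
  obtain ⟨ℓ, hℓ⟩ := hconv.exists_strongDual_le_sub hcont x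
  exact ⟨(InnerProductSpace.toDual ℝ _).symm ℓ, fun z => by
    simpa only [InnerProductSpace.toDual_symm_apply] using hℓ z⟩

theorem norm_le_of_mem_subdiffAt {K : NNReal} (hlip : LipschitzWith K φ)
    (hu : u ∈ SubdiffAt φ x) : ‖u‖ ≤ K := by
  have hsq : ‖u‖ ^ 2 ≤ K * ‖u‖ := calc
    ‖u‖ ^ 2 = ⟪u, (x + u) - x⟫ := by rw [add_sub_cancel_left, real_inner_self_eq_norm_sq]
    _ ≤ φ (x + u) - φ x := hu (x + u)
    _ ≤ K * ‖u‖ := by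
      simpa [Real.dist_eq, dist_eq_norm] using (abs_le.1 (hlip.dist_le_mul (x + u) x)).2
  rcases (norm_nonneg u).eq_or_lt with h | h
  · exact h ▸ K.coe_nonneg
  · exact le_of_mul_le_mul_right (by rwa [sq] at hsq) h

theorem convex_subdiffAt : Convex ℝ (SubdiffAt φ x) := by
  intro u₁ h₁ u₂ h₂ s t hs ht hst z
  rw [inner_add_left, real_inner_smul_left, real_inner_smul_left]
  linear_combination (mul_le_mul_of_nonneg_left (h₁ z) hs) +
    (mul_le_mul_of_nonneg_left (h₂ z) ht) + (φ z - φ x) * hst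

theorem eq_add_inner_of_mem_segment (hconv : ConvexOn ℝ univ φ) (ha : u ∈ SubdiffAt φ a)
    (hb : u ∈ SubdiffAt φ b) (hy : y ∈ segment ℝ a b) : φ y = φ a + ⟪u, y - a⟫ := by
  rw [segment_eq_image'] at hy
  obtain ⟨s, ⟨hs₀, hs₁⟩, rfl⟩ := hy
  have hba : φ b - φ a ≤ ⟪u, b - a⟫ := by
    have := hb a
    rw [← neg_sub, inner_neg_right] at this
    linarith
  refine le_antisymm ?_ (by linarith [ha (a + s • (b - a))])
  calc φ (a + s • (b - a)) = φ ((1 - s) • a + s • b) := by congr 1; module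
    _ ≤ (1 - s) * φ a + s * φ b :=
      hconv.2 (mem_univ a) (mem_univ b) (by linarith) hs₀ (by ring)
    _ = φ a + s * (φ b - φ a) := by ring
    _ ≤ φ a + ⟪u, a + s • (b - a) - a⟫ := by
      rw [add_sub_cancel_left, real_inner_smul_right]
      gcongr

theorem mem_subdiffAt_of_mem_segment (hconv : ConvexOn ℝ univ φ) (ha : u ∈ SubdiffAt φ a)
    (hb : u ∈ SubdiffAt φ b) (hy : y ∈ segment ℝ a b) : u ∈ SubdiffAt φ y := fun z => by
  have := ha z
  rw [eq_add_inner_of_mem_segment hconv ha hb hy, ← sub_sub_sub_cancel_right z y a,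
    inner_sub_right]
  linarith

theorem subdiffAt_subset_of_mem_openSegment (hconv : ConvexOn ℝ univ φ)
    (ha : u ∈ SubdiffAt φ a) (hb : u ∈ SubdiffAt φ b) (hy : y ∈ openSegment ℝ a b) :
    SubdiffAt φ y ⊆ SubdiffAt φ a := by
  intro v hv z
  have hφ := eq_add_inner_of_mem_segment hconv ha hb (openSegment_subset_segment _ _ _ hy)
  rw [openSegment_eq_image'] at hy
  obtain ⟨s, ⟨hs₀, hs₁⟩, rfl⟩ := hy
  have hφb := eq_add_inner_of_mem_segment hconv ha hb (right_mem_segment ℝ a b)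
  have hvu : ⟪v, b - a⟫ ≤ ⟪u, b - a⟫ := by
    have := hv b
    rw [show b - (a + s • (b - a)) = (1 - s) • (b - a) by module, real_inner_smul_right, hφb, hφ,
      add_sub_cancel_left, real_inner_smul_right] at this
    exact le_of_mul_le_mul_left (by linarith) (sub_pos.2 hs₁)
  calc ⟪v, z - a⟫ = ⟪v, z - (a + s • (b - a))⟫ + s * ⟪v, b - a⟫ := by
        rw [← real_inner_smul_right, ← inner_add_right]; congr 1; abel
    _ ≤ φ z - φ (a + s • (b - a)) + s * ⟪u, b - a⟫ := add_le_add (hv z) (by gcongr)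
    _ = φ z - φ a := by rw [hφ, add_sub_cancel_left, real_inner_smul_right]; ring

theorem subdiffAt_eq_singleton_of_mem_openSegment (hconv : ConvexOn ℝ univ φ)
    (ha : SubdiffAt φ a = {u}) (hb : u ∈ SubdiffAt φ b) (hy : y ∈ openSegment ℝ a b) :
    SubdiffAt φ y = {u} := by
  have hua : u ∈ SubdiffAt φ a := ha ▸ rfl
  refine subset_antisymm (ha ▸ subdiffAt_subset_of_mem_openSegment hconv hua hb hy) ?_
  exact singleton_subset_iff.2
    (mem_subdiffAt_of_mem_segment hconv hua hb (openSegment_subset_segment _ _ _ hy))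

theorem exists_ne_subdiffAt_eq_singleton (hconv : ConvexOn ℝ univ φ)
    {Ω : Set (EuclideanSpace ℝ (Fin d))} (hΩ : Ω ∈ nhds a) (ha : SubdiffAt φ a = {u})
    (hb : u ∈ SubdiffAt φ b) (hab : a ≠ b) : ∃ y ∈ Ω, y ≠ a ∧ SubdiffAt φ y = {u} := by
  obtain ⟨y, hyΩ, hy⟩ := mem_closure_iff_nhds.1
    (segment_subset_closure_openSegment (left_mem_segment ℝ a b)) Ω hΩ
  refine ⟨y, hyΩ, ?_, subdiffAt_eq_singleton_of_mem_openSegment hconv ha hb hy⟩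
  rintro rfl
  exact hab (left_mem_openSegment_iff.1 hy)

end

/-- for a convex 1-Lipschitz `φ` whose gradient is injective on an open set
`Ω` and attains every subgradient of norm `< 1` on `Ω`, at any point `x` outside the
closure of `Ω`: (a) if `u₁ ≠ u₂` are two unit-norm subgradients at `x`, then every convex
combination is again a subgradient, of norm `< 1` strictly between the endpoints; (b) the
subdifferential at `x` is a singleton of norm `1`, i.e. `φ` is differentiable there with
`‖∇φ(x)‖ = 1`. -/
theorem subdifferential_singleton_outside_support
    {d : ℕ} (φ : EuclideanSpace ℝ (Fin d) → ℝ)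
    (hconv : ConvexOn ℝ Set.univ φ) (hlip : LipschitzWith 1 φ)
    (Ω : Set (EuclideanSpace ℝ (Fin d))) (hΩ : IsOpen Ω)
    (hattain : ∀ x u, u ∈ SubdiffAt φ x → ‖u‖ < 1 → ∃ x0 ∈ Ω, SubdiffAt φ x0 = {u})
    (hinj : ∀ x1 ∈ Ω, ∀ x2 ∈ Ω, ∀ u : EuclideanSpace ℝ (Fin d),
      SubdiffAt φ x1 = {u} → SubdiffAt φ x2 = {u} → x1 = x2)
    (x : EuclideanSpace ℝ (Fin d)) (hx : x ∉ closure Ω) :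
    (∀ u1 u2, u1 ∈ SubdiffAt φ x → u2 ∈ SubdiffAt φ x → u1 ≠ u2 →
      ‖u1‖ = 1 → ‖u2‖ = 1 →
        (∀ t ∈ Set.Icc (0 : ℝ) 1, (1 - t) • u1 + t • u2 ∈ SubdiffAt φ x) ∧
        (∀ t ∈ Set.Ioo (0 : ℝ) 1, ‖(1 - t) • u1 + t • u2‖ < 1)) ∧
    (∃ u, SubdiffAt φ x = {u} ∧ ‖u‖ = 1) := by
  have hnorm : ∀ u ∈ SubdiffAt φ x, ‖u‖ = 1 := by
    refine fun u hu => le_antisymm (norm_le_of_mem_subdiffAt hlip hu) (not_lt.1 fun hlt => ?_)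
    obtain ⟨x0, hx0Ω, hx0⟩ := hattain x u hu hlt
    obtain ⟨y, hyΩ, hyx0, hy⟩ := exists_ne_subdiffAt_eq_singleton hconv (hΩ.mem_nhds hx0Ω) hx0
      hu (ne_of_mem_of_not_mem (subset_closure hx0Ω) hx)
    exact hyx0 (hinj y hyΩ x0 hx0Ω u hy hx0)
  refine ⟨fun u1 u2 h1 h2 hne hn1 hn2 =>
    ⟨fun t ht => convex_subdiffAt h1 h2 (sub_nonneg.2 ht.2) ht.1 (sub_add_cancel 1 t),
      fun t ht => norm_combo_lt_of_ne hn1.le hn2.le hne (sub_pos.2 ht.2) ht.1 (sub_add_cancel 1 t)⟩,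
    ?_⟩
  obtain ⟨u, hu⟩ : (SubdiffAt φ x).Nonempty := subdiffAt_nonempty hconv hlip.continuous
  refine ⟨u, eq_singleton_iff_unique_mem.2 ⟨hu, fun v hv => ?_⟩, hnorm u hu⟩
  by_contra hvu
  have hmid := convex_subdiffAt hv hu one_half_pos.le one_half_pos.le (add_halves (1 : ℝ))
  exact (norm_combo_lt_of_ne (hnorm v hv).le (hnorm u hu).le hvu one_half_pos one_half_pos
    (add_halves 1)).ne (hnorm _ hmid)
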